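/- Let $k = \mathbb{F}_q \subseteq K = \mathbb{F}_{q^3}$ be finite fields of characteristic $2$, let $\mathrm{Tr}: K \to k$ be the trace, and let $X = \{(a,d) \in K^* \times K \mid a + a^q + d \neq 0,\ \mathrm{Tr}(a) + \mathrm{Tr}(d) \neq 1\}$. The Frobenius map $\varphi(a,d) = (a^q, d^q)$ maps $X$ to itself and the number of its orbits on $X$ equals $\frac{1}{3}\left(q^6 - q^5 - 2q^3 + 4q^2 - 6q + 7\right)$. -/

import Mathlib

/-!
The map `φ` satisfies `φ³ = id`, so Burnside's lemma for the induced action of `ZMod 3` gives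
`3 · #(X/φ) = #X + 2 · #(fixed points of φ)`.

Write `T` for the trace. For fixed `a ≠ 0`, the admissible `d` are those with
`T d ≠ 1 + T a`, except `d = a + a^q`, which lies in that set exactly when `T a ≠ 1` since
`T (a + a^q) = 2 T a = 0`. Every fibre of `T` over `𝔽_q` has `q²` elements, so
`#X = (q³ - 1)(q³ - q²) - (q³ - q² - 1)`. The fixed points of `φ` are the pairs `(a, d)` of
nonzero elements of `𝔽_q` with `a + d ≠ 1`, and there are `(q - 1)² - (q - 2)` of them.
-/

/-- The defining conditions of the set `X` of descent data `𝒟_{γ₃}`: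
pairs `(a,d) ∈ K* × K` with `a + a^q + d ≠ 0` and `Tr(a) + Tr(d) ≠ 1`,
where `Tr(x) = x + x^q + x^{q²}` is the trace of `K = 𝔽_{q³}` over `𝔽_q`. -/
def stmt8Cond (K : Type) [Field K] (q : ℕ) (v : K × K) : Prop :=
  v.1 ≠ 0 ∧ v.1 + v.1 ^ q + v.2 ≠ 0 ∧
    (v.1 + v.1 ^ q + v.1 ^ q ^ 2) + (v.2 + v.2 ^ q + v.2 ^ q ^ 2) ≠ 1

open Finset Function Polynomial

def Quot.equivQuotientOfEqvGen {α : Type*} {r : α → α → Prop} (s : Setoid α)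
    (hr : ∀ x y, r x y → s x y) (hs : ∀ x y, s x y → Relation.EqvGen r x y) :
    Quot r ≃ Quotient s where
  toFun := Quot.lift (Quotient.mk s) fun x y h => Quotient.sound (hr x y h)
  invFun := Quotient.lift (s := s) (Quot.mk r) fun x y h => Quot.eqvGen_sound (hs x y h)
  left_inv := by rintro ⟨x⟩; rfl
  right_inv := by rintro ⟨x⟩; rfl

section OrbitCount
variable {S : Type*}

abbrev iterateAddAction (f : S → S) (n : ℕ) [NeZero n] (hf : f^[n] = id) :
    AddAction (ZMod n) S where
  vadd g x := f^[g.val] x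
  zero_vadd x := by simp [HVAdd.hVAdd]
  add_vadd g h x := by
    change f^[(g + h).val] x = f^[g.val] (f^[h.val] x)
    have hx : IsPeriodicPt f n x := congrFun hf x
    rw [ZMod.val_add, hx.iterate_mod_apply, iterate_add_apply]

theorem prime_mul_card_quot_of_iterate_eq_id (p : ℕ) [Fact p.Prime] [Finite S] (f : S → S)
    (hf : f^[p] = id) :
    p * Nat.card (Quot fun x y => f x = y) = Nat.card S + (p - 1) * Nat.card (fixedPoints f) := by
  classical
  cases nonempty_fintype S
  let := iterateAddAction f p hf
  let s := AddAction.orbitRel (ZMod p) S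
  have hperiodic : ∀ x, IsPeriodicPt f p x := fun x => congrFun hf x
  have horbit : ∀ x y, s x y ↔ ∃ k, f^[k] y = x := by
    intro x y
    rw [AddAction.orbitRel_apply, AddAction.mem_orbit_iff]
    refine ⟨fun ⟨g, hg⟩ => ⟨g.val, hg⟩, fun ⟨k, hk⟩ => ⟨k, ?_⟩⟩
    change f^[(k : ZMod p).val] y = x
    rw [ZMod.val_natCast, (hperiodic y).iterate_mod_apply, hk]
  have hgen : ∀ k y, Relation.EqvGen (fun x y => f x = y) y (f^[k] y) := by
    intro k y
    induction k with
    | zero => exact .refl y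
    | succ k ih => exact .trans _ _ _ ih (.rel _ _ (iterate_succ_apply' f k y).symm)
  have e := Quot.equivQuotientOfEqvGen (r := fun x y => f x = y) s
    (fun x y h => s.iseqv.symm ((horbit y x).2 ⟨1, h⟩))
    fun x y h => by
      obtain ⟨k, rfl⟩ := (horbit x y).1 h
      exact .symm _ _ (hgen k y)
  -- a nonzero element of `ZMod p` generates it, so fixes exactly the fixed points of `f`
  have hfix : ∀ g : ZMod p, g ≠ 0 → AddAction.fixedBy S g = fixedPoints f := by
    intro g hg
    ext x
    have hcop : g.val.Coprime p := ZMod.val_coe_unit_coprime (Units.mk0 g hg)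
    refine ⟨fun hx => ?_, fun hx => hx.iterate g.val⟩
    have := IsPeriodicPt.gcd hx (hperiodic x)
    rwa [hcop.gcd_eq_one, IsPeriodicPt, iterate_one] at this
  have hburnside := AddAction.sum_card_fixedBy_eq_card_orbits_mul_card_addGroup (ZMod p) S
  simp only [← Nat.card_eq_fintype_card] at hburnside
  rw [Fintype.sum_eq_add_sum_compl 0,
    sum_congr rfl fun g hg => by rw [hfix g (by simpa using hg)]] at hburnside
  simp only [sum_const, card_compl, ZMod.card] at hburnside
  rw [AddAction.fixedBy_zero_eq_univ, Nat.card_univ, card_singleton, smul_eq_mul, Nat.card_zmod,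
    ← Nat.card_congr e] at hburnside
  rw [mul_comm, ← hburnside]

end OrbitCount

section FiniteField
variable {K : Type*} [Field K] {q n : ℕ}

def cubicTrace (q : ℕ) (x : K) : K := x + x ^ q + x ^ q ^ 2

theorem cubicTrace_zero (hq : q ≠ 0) : cubicTrace q (0 : K) = 0 := by
  simp [cubicTrace, hq]

variable [Fintype K]

theorem one_lt_of_card_eq_pow (hK : Fintype.card K = q ^ n) : 1 < q := by
  by_contra! hq
  have : 1 < q ^ n := hK ▸ Fintype.one_lt_card
  exact this.not_ge (pow_le_one₀ (Nat.zero_le q) hq)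

theorem exists_eq_ringChar_pow_of_card_eq_pow (hK : Fintype.card K = q ^ n) :
    ∃ m, q = ringChar K ^ m := by
  obtain ⟨k, hp, hk⟩ := FiniteField.card K (ringChar K)
  have hn : n ≠ 0 := by
    rintro rfl
    exact (Fintype.one_lt_card (α := K)).ne' (by simpa using hK)
  obtain ⟨m, -, hm⟩ := (Nat.dvd_prime_pow hp).1 (hk ▸ hK ▸ dvd_pow_self q hn)
  exact ⟨m, hm⟩

theorem add_pow_of_card_eq_pow (hK : Fintype.card K = q ^ n) (x y : K) :
    (x + y) ^ q = x ^ q + y ^ q := by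
  obtain ⟨m, rfl⟩ := exists_eq_ringChar_pow_of_card_eq_pow hK
  obtain ⟨-, hp, -⟩ := FiniteField.card K (ringChar K)
  have : Fact (ringChar K).Prime := ⟨hp⟩
  exact add_pow_char_pow x y _ m

theorem card_filter_eval_eq_zero_le [DecidableEq K] {p : K[X]} (hp : p ≠ 0) :
    #{x | p.eval x = 0} ≤ p.natDegree :=
  card_le_degree_of_subset_roots fun x hx => by simp_all

theorem card_filter_pow_eq_self_le [DecidableEq K] (hq : 1 < q) : #{x : K | x ^ q = x} ≤ q := by
  have hdeg : (X ^ q - X : K[X]).natDegree = q := by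
    compute_degree!
    · simp [hq.ne]
    · omega
  calc #{x : K | x ^ q = x} = #{x | (X ^ q - X : K[X]).eval x = 0} := by
        simp [sub_eq_zero]
  _ ≤ q := (card_filter_eval_eq_zero_le (ne_zero_of_natDegree_gt (hdeg ▸ hq))).trans hdeg.le

theorem card_filter_cubicTrace_eq_zero_le [DecidableEq K] (hq : 1 < q) :
    #{x : K | cubicTrace q x = 0} ≤ q ^ 2 := by
  have hq2 : q < q ^ 2 := by nlinarith
  have hdeg : (X + X ^ q + X ^ q ^ 2 : K[X]).natDegree = q ^ 2 := by
    compute_degree!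
    · simp [hq2.ne', (hq.trans hq2).ne]
    all_goals omega
  calc #{x : K | cubicTrace q x = 0} = #{x | (X + X ^ q + X ^ q ^ 2 : K[X]).eval x = 0} := by
        simp only [cubicTrace, eval_add, eval_pow, eval_X]
        rfl
  _ ≤ q ^ 2 := (card_filter_eval_eq_zero_le
      (ne_zero_of_natDegree_gt (hdeg ▸ hq.trans hq2))).trans hdeg.le

theorem pow_pow_three_eq_self (hK : Fintype.card K = q ^ 3) (x : K) : x ^ q ^ 3 = x :=
  hK ▸ FiniteField.pow_card x

theorem cubicTrace_add (hK : Fintype.card K = q ^ 3) (x y : K) :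
    cubicTrace q (x + y) = cubicTrace q x + cubicTrace q y := by
  have h := add_pow_of_card_eq_pow hK
  simp only [cubicTrace, h, sq, pow_mul]
  ring

theorem cubicTrace_pow_self (hK : Fintype.card K = q ^ 3) (x : K) :
    cubicTrace q (x ^ q) = cubicTrace q x := by
  have h := pow_pow_three_eq_self hK x
  simp only [cubicTrace, ← pow_mul] at h ⊢
  rw [← pow_succ', h]
  ring

theorem cubicTrace_pow (hK : Fintype.card K = q ^ 3) (x : K) :
    cubicTrace q x ^ q = cubicTrace q x := by
  have h := pow_pow_three_eq_self hK x
  simp only [cubicTrace, add_pow_of_card_eq_pow hK, ← pow_mul] at h ⊢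
  rw [← pow_succ, h]
  ring

def cubicTraceHom (hK : Fintype.card K = q ^ 3) : K →+ K where
  toFun := cubicTrace q
  map_zero' := cubicTrace_zero (zero_lt_one.trans (one_lt_of_card_eq_pow hK)).ne'
  map_add' := cubicTrace_add hK

theorem card_fiber_cubicTrace [DecidableEq K] (hK : Fintype.card K = q ^ 3) {c : K}
    (hc : c ∈ univ.image (cubicTrace q)) :
    #{x | cubicTrace q x = c} = #{x : K | cubicTrace q x = 0} := by
  obtain ⟨x, -, rfl⟩ := mem_image.1 hc
  exact AddMonoidHom.card_fiber_eq_of_mem_range (cubicTraceHom hK) ⟨x, rfl⟩ ⟨0, map_zero _⟩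

theorem image_cubicTrace_subset [DecidableEq K] (hK : Fintype.card K = q ^ 3) :
    univ.image (cubicTrace q) ⊆ ({x | x ^ q = x} : Finset K) := by
  intro c hc
  obtain ⟨x, -, rfl⟩ := mem_image.1 hc
  simpa using cubicTrace_pow hK x

theorem card_image_cubicTrace_and_card_ker [DecidableEq K] (hK : Fintype.card K = q ^ 3) :
    #(univ.image (cubicTrace q : K → K)) = q ∧ #{x : K | cubicTrace q x = 0} = q ^ 2 := by
  have hq := one_lt_of_card_eq_pow hK
  -- `#image ≤ #𝔽_q ≤ q` and `#ker ≤ q²`, while their product is `#K = q³`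
  have hprod :
      #(univ.image (cubicTrace q : K → K)) * #{x : K | cubicTrace q x = 0} = q * q ^ 2 := by
    rw [← pow_succ', ← hK, ← card_univ, card_eq_sum_card_image (cubicTrace q) univ,
      sum_congr rfl fun c hc => card_fiber_cubicTrace hK hc, sum_const, smul_eq_mul]
  refine (mul_eq_mul_iff_eq_and_eq_of_pos
    ((card_le_card (image_cubicTrace_subset hK)).trans (card_filter_pow_eq_self_le hq))
    (card_filter_cubicTrace_eq_zero_le hq) (card_pos.2 ⟨_, mem_image_of_mem _ (mem_univ 0)⟩)
    (by positivity)).1 hprod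

theorem image_cubicTrace [DecidableEq K] (hK : Fintype.card K = q ^ 3) :
    univ.image (cubicTrace q) = ({x | x ^ q = x} : Finset K) :=
  eq_of_subset_of_card_le (image_cubicTrace_subset hK) <|
    (card_filter_pow_eq_self_le (one_lt_of_card_eq_pow hK)).trans
      (card_image_cubicTrace_and_card_ker hK).1.ge

theorem card_filter_pow_eq_self [DecidableEq K] (hK : Fintype.card K = q ^ 3) :
    #{x : K | x ^ q = x} = q :=
  image_cubicTrace hK ▸ (card_image_cubicTrace_and_card_ker hK).1

theorem card_filter_cubicTrace_eq [DecidableEq K] (hK : Fintype.card K = q ^ 3) {c : K}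
    (hc : c ^ q = c) : #{x | cubicTrace q x = c} = q ^ 2 := by
  rw [card_fiber_cubicTrace hK (image_cubicTrace hK ▸ by simpa using hc),
    (card_image_cubicTrace_and_card_ker hK).2]

theorem card_filter_cubicTrace_ne [DecidableEq K] (hK : Fintype.card K = q ^ 3) {c : K}
    (hc : c ^ q = c) : (#{x | cubicTrace q x ≠ c} : ℤ) = q ^ 3 - q ^ 2 := by
  have h := card_filter_add_card_filter_not (s := univ) fun x : K => cubicTrace q x = c
  rw [card_filter_cubicTrace_eq hK hc, card_univ, hK, ← Nat.cast_inj (R := ℤ)] at h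
  push_cast at h
  simp only [ne_eq]
  linarith

end FiniteField

section Counting
variable {K : Type} [Field K] {q : ℕ}

instance [DecidableEq K] : DecidablePred (stmt8Cond K q) :=
  fun _ => inferInstanceAs (Decidable (_ ∧ _ ∧ _))

theorem stmt8Cond_iff {v : K × K} : stmt8Cond K q v ↔
    v.1 ≠ 0 ∧ v.1 + v.1 ^ q + v.2 ≠ 0 ∧ cubicTrace q v.1 + cubicTrace q v.2 ≠ 1 :=
  Iff.rfl

theorem card_filter_univ_prod {α β : Type*} [Fintype α] [Fintype β] (P : α × β → Prop)
    [DecidablePred P] : #{v | P v} = ∑ a, #{b | P (a, b)} := by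
  simp only [card_filter, Fintype.sum_prod_type]

theorem sum_card_erase {ι α : Type*} [DecidableEq α] (s : Finset ι) (t : ι → Finset α)
    (e : ι → α) {n : ℤ} (ht : ∀ i ∈ s, (#(t i) : ℤ) = n) :
    ∑ i ∈ s, (#((t i).erase (e i)) : ℤ) = #s * n - #{i ∈ s | e i ∈ t i} := by
  have h : ∀ i ∈ s, (#((t i).erase (e i)) : ℤ) = n - if e i ∈ t i then 1 else 0 := by
    intro i hi
    rw [card_erase_eq_ite]
    split_ifs with h
    · rw [Nat.cast_sub (card_pos.2 ⟨_, h⟩), ht i hi, Nat.cast_one]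
    · rw [ht i hi, sub_zero]
  rw [sum_congr rfl h, sum_sub_distrib, sum_const, sum_boole, nsmul_eq_mul]

theorem stmt8Cond_pow [Fintype K] (hK : Fintype.card K = q ^ 3) {v : K × K}
    (hv : stmt8Cond K q v) : stmt8Cond K q (v.1 ^ q, v.2 ^ q) := by
  obtain ⟨ha, hb, hc⟩ := hv
  refine ⟨pow_ne_zero _ ha, ?_, ?_⟩
  · simpa only [add_pow_of_card_eq_pow hK] using pow_ne_zero q hb
  · change cubicTrace q (v.1 ^ q) + cubicTrace q (v.2 ^ q) ≠ 1
    rwa [cubicTrace_pow_self hK, cubicTrace_pow_self hK]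

variable [CharP K 2]

theorem cubicTrace_add_pow_self [Fintype K] (hK : Fintype.card K = q ^ 3) (a : K) :
    cubicTrace q (a + a ^ q) = 0 := by
  rw [cubicTrace_add hK, cubicTrace_pow_self hK, CharTwo.add_self_eq_zero]

theorem cubicTrace_of_pow_eq_self {x : K} (hx : x ^ q = x) : cubicTrace q x = x := by
  rw [cubicTrace, sq, pow_mul, hx, hx, CharTwo.add_self_eq_zero, zero_add]

theorem filter_stmt8Cond_mk [Fintype K] [DecidableEq K] {a : K} (ha : a ≠ 0) :
    ({d | stmt8Cond K q (a, d)} : Finset K) =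
      ({d | cubicTrace q d ≠ 1 + cubicTrace q a} : Finset K).erase (a + a ^ q) := by
  ext d
  have h₁ : a + a ^ q + d = 0 ↔ d = a + a ^ q := by rw [CharTwo.add_eq_zero, eq_comm]
  have h₂ : cubicTrace q a + cubicTrace q d = 1 ↔ cubicTrace q d = 1 + cubicTrace q a := by
    rw [add_comm, CharTwo.add_eq_iff_eq_add]
  simp only [mem_erase, mem_filter, mem_univ, true_and, stmt8Cond_iff, ne_eq, ha,
    not_false_eq_true, h₁, h₂]

theorem filter_stmt8Cond_mk_fixed [Fintype K] [DecidableEq K] {a : K} (ha : a ^ q = a)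
    (ha0 : a ≠ 0) :
    ({d | stmt8Cond K q (a, d) ∧ a ^ q = a ∧ d ^ q = d} : Finset K) =
      (({d | d ^ q = d} : Finset K).erase 0).erase (a + 1) := by
  ext d
  simp only [mem_erase, mem_filter, mem_univ, true_and, stmt8Cond_iff, ne_eq, ha, ha0,
    not_false_eq_true, CharTwo.add_self_eq_zero, zero_add, cubicTrace_of_pow_eq_self ha]
  have h : a + d = 1 ↔ d = a + 1 := by rw [add_comm a, CharTwo.add_eq_iff_eq_add, add_comm 1]
  constructor
  · rintro ⟨⟨hd, had⟩, hdq⟩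
    rw [cubicTrace_of_pow_eq_self hdq, h] at had
    exact ⟨had, hd, hdq⟩
  · rintro ⟨had, hd, hdq⟩
    rw [cubicTrace_of_pow_eq_self hdq, h]
    exact ⟨⟨hd, had⟩, hdq⟩

theorem card_filter_stmt8Cond [Fintype K] [DecidableEq K] (hK : Fintype.card K = q ^ 3) :
    (#{v : K × K | stmt8Cond K q v} : ℤ) =
      (q ^ 3 - 1) * (q ^ 3 - q ^ 2) - (q ^ 3 - q ^ 2 - 1) := by
  have hfiber : ∀ a ∈ univ.erase (0 : K),
      (#{d | cubicTrace q d ≠ 1 + cubicTrace q a} : ℤ) = q ^ 3 - q ^ 2 := fun a _ =>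
    card_filter_cubicTrace_ne hK (by rw [add_pow_of_card_eq_pow hK, one_pow, cubicTrace_pow hK])
  have hbad : {a ∈ univ.erase (0 : K) |
      a + a ^ q ∈ ({d | cubicTrace q d ≠ 1 + cubicTrace q a} : Finset K)} =
      ({a | cubicTrace q a ≠ 1} : Finset K).erase 0 := by
    ext a
    simp [cubicTrace_add_pow_self hK, eq_comm (a := (0 : K)), CharTwo.add_eq_zero,
      eq_comm (a := (1 : K)), and_comm]
  have hbad_card := card_erase_add_one (s := ({a | cubicTrace q a ≠ 1} : Finset K))
    (a := 0) (by simp [cubicTrace_zero (zero_lt_one.trans (one_lt_of_card_eq_pow hK)).ne'])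
  have huniv := card_erase_add_one (mem_univ (0 : K))
  rw [card_filter_univ_prod, Nat.cast_sum, ← sum_erase univ (a := 0) (by simp [stmt8Cond]),
    sum_congr rfl fun a ha => by rw [filter_stmt8Cond_mk (ne_of_mem_erase ha)],
    sum_card_erase _ _ _ hfiber, hbad]
  rw [card_univ, hK] at huniv
  have := card_filter_cubicTrace_ne hK (one_pow q)
  zify at huniv hbad_card
  linear_combination (↑q ^ 3 - ↑q ^ 2 : ℤ) * huniv - hbad_card - this

theorem card_filter_stmt8Cond_fixed [Fintype K] [DecidableEq K] (hK : Fintype.card K = q ^ 3) :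
    (#{v : K × K | stmt8Cond K q v ∧ v.1 ^ q = v.1 ∧ v.2 ^ q = v.2} : ℤ) =
      (q - 1) ^ 2 - (q - 2) := by
  set F : Finset K := {x | x ^ q = x}
  have hq := one_lt_of_card_eq_pow hK
  have h0 : (0 : K) ∈ F := by simp [F, show q ≠ 0 by omega]
  have h1 : (1 : K) ∈ F.erase 0 := by simp [F]
  have hF := card_erase_add_one h0
  have hF1 := card_erase_add_one h1
  rw [card_filter_pow_eq_self hK] at hF
  have hbad : {a ∈ F.erase 0 | a + 1 ∈ F.erase 0} = (F.erase 0).erase 1 := by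
    ext a
    simp only [F, mem_erase, mem_filter, mem_univ, true_and, ne_eq, CharTwo.add_eq_zero,
      add_pow_of_card_eq_pow hK, one_pow, add_left_inj]
    tauto
  have hfiber : ∀ a ∈ F.erase 0, (#(F.erase 0) : ℤ) = q - 1 := fun _ _ => by
    rw [← hF]; push_cast; ring
  rw [card_filter_univ_prod, Nat.cast_sum, ← sum_subset (subset_univ (F.erase 0)) ?_,
    sum_congr rfl fun a ha => by
      obtain ⟨ha0, haF⟩ := mem_erase.1 ha
      rw [filter_stmt8Cond_mk_fixed (mem_filter.1 haF).2 ha0],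
    sum_card_erase _ _ _ hfiber, hbad]
  · zify at hF hF1
    linear_combination (↑q - 2 : ℤ) * hF - hF1
  · intro a _ ha
    rw [Nat.cast_eq_zero, card_eq_zero, filter_eq_empty_iff]
    rintro d - ⟨hc, haq, -⟩
    exact ha (mem_erase.2 ⟨hc.1, by simpa [F] using haq⟩)

end Counting

/-- Let `k = 𝔽_q ⊆ K = 𝔽_{q³}` be finite fields of characteristic 2. The
Frobenius `φ(a,d) = (a^q, d^q)` maps `X = 𝒟_{γ₃}` to itself and the number of
its orbits on `X` equals `(q⁶ - q⁵ - 2q³ + 4q² - 6q + 7)/3`. -/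
theorem stmt_8 (K : Type) [Field K] [Fintype K] [CharP K 2] (q : ℕ)
    (hK : Fintype.card K = q ^ 3) :
    (∀ v : K × K, stmt8Cond K q v → stmt8Cond K q (v.1 ^ q, v.2 ^ q)) ∧
    (3 : ℤ) * Nat.card (Quot fun (x y : {v : K × K // stmt8Cond K q v}) =>
        (x.1.1 ^ q, x.1.2 ^ q) = y.1)
      = q ^ 6 - q ^ 5 - 2 * q ^ 3 + 4 * q ^ 2 - 6 * q + 7 := by
  classical
  refine ⟨fun v => stmt8Cond_pow hK, ?_⟩
  set φ : {v // stmt8Cond K q v} → {v // stmt8Cond K q v} :=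
    fun x => ⟨(x.1.1 ^ q, x.1.2 ^ q), stmt8Cond_pow hK x.2⟩
  have hφ : φ^[3] = id := funext fun x => by
    ext <;> simp [φ, ← pow_mul, ← pow_three', pow_pow_three_eq_self hK]
  have hrel : (fun (x y : {v : K × K // stmt8Cond K q v}) => (x.1.1 ^ q, x.1.2 ^ q) = y.1) =
      fun x y => φ x = y := by
    ext x y
    rw [Subtype.ext_iff]
  have hfix : Nat.card (fixedPoints φ) =
      #{v : K × K | stmt8Cond K q v ∧ v.1 ^ q = v.1 ∧ v.2 ^ q = v.2} := by
    rw [← Fintype.card_subtype, ← Nat.card_eq_fintype_card]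
    refine Nat.card_congr ((Equiv.subtypeEquivRight fun x => ?_).trans
      (Equiv.subtypeSubtypeEquivSubtypeInter (stmt8Cond K q)
        fun v => v.1 ^ q = v.1 ∧ v.2 ^ q = v.2))
    exact Subtype.ext_iff.trans Prod.ext_iff
  have hcard : Nat.card {v // stmt8Cond K q v} = #{v : K × K | stmt8Cond K q v} := by
    rw [Nat.card_eq_fintype_card, Fintype.card_subtype]
  have := prime_mul_card_quot_of_iterate_eq_id 3 φ hφ
  rw [hcard, hfix] at this
  rw [hrel, ← Nat.cast_ofNat, ← Nat.cast_mul, this]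
  push_cast
  rw [card_filter_stmt8Cond hK, card_filter_stmt8Cond_fixed hK]
  ring
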